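/- arXiv:1905.02198 — 2 statements merged into one kernel-verified Lean document; each statement's English description precedes it below -/
import Mathlib

section
/- Let F be an abstract self-similar set on m symbols satisfying the separation condition: there exist ε₀ > 0 and n ∈ ℕ such that for every multi-index i_1...i_n there is a multi-index j_1...j_n with d(F_{i_1...i_n}, F_{j_1...j_n}) ≥ ε₀. Then the similarity map φ has sensitive dependence on initial conditions with sensitivity constant ε₀. -/
/-- The distance between two sets: `inf { dist x y : x ∈ A, y ∈ B }`. -/
noncomputable def setDist {X : Type*} [MetricSpace X] (A B : Set X) : ℝ :=
  sInf (Set.image2 dist A B)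

lemma setDist_le {X : Type*} [MetricSpace X] {A B : Set X} {a b : X}
    (ha : a ∈ A) (hb : b ∈ B) : setDist A B ≤ dist a b := by
  apply csInf_le
  · exact ⟨0, fun z hz => by
      obtain ⟨u, hu, v, hv, rfl⟩ := hz
      exact dist_nonneg⟩
  · exact Set.mem_image2_of_mem ha hb

/-- An abstract self-similar set (compact metric space, points coded bijectively by infinite
index sequences, cylinders `A l`, similarity map `φ` = left shift on index sequences,
diameter condition) satisfying the separation condition of degree `n` with separation
constant `ε₀`: the similarity map has sensitive dependence on initial conditions with
sensitivity constant `ε₀`. -/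
theorem stmt10 {X : Type*} [MetricSpace X] [CompactSpace X] (m : ℕ) (hm : 1 ≤ m)
    (π : (ℕ → Fin m) → X) (hπ : Function.Bijective π)
    (φ : X → X) (hφ : ∀ i : ℕ → Fin m, φ (π i) = π fun k => i (k + 1))
    (A : List (Fin m) → Set X)
    (hA : ∀ l : List (Fin m),
      A l = π '' {i : ℕ → Fin m | ∀ k : ℕ, ∀ h : k < l.length, i k = l.get ⟨k, h⟩})
    (hdiam : ∀ ε : ℝ, 0 < ε → ∃ N : ℕ, ∀ l : List (Fin m), N ≤ l.length →
      Metric.diam (A l) ≤ ε)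
    (ε₀ : ℝ) (hε₀ : 0 < ε₀) (n : ℕ)
    (hsep : ∀ l : List (Fin m), l.length = n → ∃ l' : List (Fin m), l'.length = n ∧
      ε₀ ≤ setDist (A l) (A l')) :
    ∀ x : X, ∀ ε : ℝ, 0 < ε → ∃ y : X, ∃ N : ℕ,
      dist x y < ε ∧ ε₀ ≤ dist (φ^[N] x) (φ^[N] y) := by
  -- iterate formula
  have hiter : ∀ (N : ℕ) (i : ℕ → Fin m), φ^[N] (π i) = π fun k => i (k + N) := by
    intro N
    induction N with
    | zero => intro i; simp
    | succ N ih =>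
      intro i
      rw [Function.iterate_succ_apply, hφ, ih]
      congr 1
  intro x ε hε
  obtain ⟨i, rfl⟩ := hπ.2 x
  obtain ⟨N, hN⟩ := hdiam (ε / 2) (by linarith)
  -- the cylinder of x of length N
  set l₀ : List (Fin m) := List.ofFn (fun k : Fin N => i k) with hl₀
  have hl₀len : l₀.length = N := by simp [hl₀]
  -- the length-n cylinder of φ^[N] x
  set l : List (Fin m) := List.ofFn (fun k : Fin n => i (↑k + N)) with hl
  have hllen : l.length = n := by simp [hl]
  obtain ⟨l', hl'len, hl'sep⟩ := hsep l hllen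
  -- build the code of y
  set j : ℕ → Fin m := fun k =>
    if k < N then i k
    else if h : k - N < n then l'.get ⟨k - N, hl'len ▸ h⟩ else i k with hj
  refine ⟨π j, N, ?_, ?_⟩
  · -- dist (π i) (π j) < ε
    have hmem : ∀ f : ℕ → Fin m, (∀ k, k < N → f k = i k) → π f ∈ A l₀ := by
      intro f hf
      rw [hA]
      refine ⟨f, ?_, rfl⟩
      intro k hk
      have hk' : k < N := by rwa [hl₀len] at hk
      simp [hl₀, hf k hk', List.get_ofFn]
    have h1 : π i ∈ A l₀ := hmem i (fun _ _ => rfl)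
    have h2 : π j ∈ A l₀ := hmem j (fun k hk => by simp [hj, hk])
    have := Metric.dist_le_diam_of_mem
      ((isCompact_univ.isBounded).subset (Set.subset_univ _)) h1 h2
    have := hN l₀ (le_of_eq hl₀len.symm)
    linarith
  · -- separation at time N
    rw [hiter N i, hiter N j]
    have hxmem : π (fun k => i (k + N)) ∈ A l := by
      rw [hA]
      refine ⟨_, ?_, rfl⟩
      intro k hk
      simp [hl, List.get_ofFn]
    have hymem : π (fun k => j (k + N)) ∈ A l' := by
      rw [hA]
      refine ⟨_, ?_, rfl⟩
      intro k hk
      have hk' : k < n := by rwa [hl'len] at hk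
      have h1 : ¬ (k + N < N) := by omega
      have h2 : k + N - N < n := by omega
      simp only [hj, h1, if_false, h2, dif_pos]
      congr 1
      simp only [Fin.mk.injEq]
      omega
    exact le_trans hl'sep (setDist_le hxmem hymem)
end

section
/- The Bernoulli shift σ on the binary sequence space Σ is Li–Yorke chaotic: there exists an uncountable set S ⊆ Σ such that for all distinct s, t ∈ S, liminf_{n→∞} d(σ^n(s), σ^n(t)) = 0 and limsup_{n→∞} d(σ^n(s), σ^n(t)) > 0. -/
/-!
Split ℕ into the dyadic blocks `[2^k - 1, 2^(k+1) - 1)` of length `2^k`. To a sequence `a` attach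
the sequence that carries the first `2^k` terms of `a` on each odd block and zeros on each even
block. This map is injective, so its image is uncountable. Two such sequences agree on every even
block, whose lengths are unbounded, so the shifted distance comes arbitrarily close to `0`; if
`a m ≠ b m`, then they differ at offset `m` of every odd block past `m`, which puts the shifted
distance at least `1` infinitely often.
-/

open Filter

/-- The metric on the space of infinite binary sequences (indexed from 0). -/
noncomputable def strDist (s t : ℕ → Fin 2) : ℝ :=
  ∑' k : ℕ, |(s k : ℝ) - (t k : ℝ)| / 2 ^ k

/-- The Bernoulli (left) shift. -/
def shift (s : ℕ → Fin 2) : ℕ → Fin 2 := fun k => s (k + 1)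

lemma abs_sub_le_one_of_fin_two (x y : Fin 2) : |(x : ℝ) - (y : ℝ)| ≤ 1 := by
  fin_cases x <;> fin_cases y <;> norm_num

lemma strDist_term_le (s t : ℕ → Fin 2) (k : ℕ) :
    |(s k : ℝ) - (t k : ℝ)| / 2 ^ k ≤ (1 / 2 : ℝ) ^ k := by
  rw [div_pow, one_pow]
  exact div_le_div_of_nonneg_right (abs_sub_le_one_of_fin_two _ _) (by positivity)

lemma summable_strDist (s t : ℕ → Fin 2) :
    Summable fun k => |(s k : ℝ) - (t k : ℝ)| / 2 ^ k :=
  .of_nonneg_of_le (fun _ => by positivity) (strDist_term_le s t) summable_geometric_two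

lemma strDist_nonneg (s t : ℕ → Fin 2) : 0 ≤ strDist s t :=
  tsum_nonneg fun _ => by positivity

lemma strDist_le_two (s t : ℕ → Fin 2) : strDist s t ≤ 2 :=
  (Summable.tsum_le_tsum (strDist_term_le s t) (summable_strDist s t)
    summable_geometric_two).trans_eq tsum_geometric_two

lemma one_le_strDist {s t : ℕ → Fin 2} (h : s 0 ≠ t 0) : 1 ≤ strDist s t := by
  have head : (1 : ℝ) ≤ |(s 0 : ℝ) - (t 0 : ℝ)| / 2 ^ 0 := by
    revert h; generalize s 0 = x; generalize t 0 = y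
    fin_cases x <;> fin_cases y <;> norm_num
  exact head.trans ((summable_strDist s t).le_tsum 0 fun _ _ => by positivity)

lemma strDist_le_of_forall_lt_eq {s t : ℕ → Fin 2} (N : ℕ) (h : ∀ k < N, s k = t k) :
    strDist s t ≤ 2 * (1 / 2 : ℝ) ^ N := by
  have head : ∑ k ∈ Finset.range N, |(s k : ℝ) - (t k : ℝ)| / 2 ^ k = 0 :=
    Finset.sum_eq_zero fun k hk => by simp [h k (Finset.mem_range.mp hk)]
  have tail : ∑' k, |(s (k + N) : ℝ) - (t (k + N) : ℝ)| / 2 ^ (k + N)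
      ≤ ∑' k, (1 / 2 : ℝ) ^ (k + N) :=
    Summable.tsum_le_tsum (fun k => strDist_term_le s t (k + N))
      ((summable_nat_add_iff N).mpr (summable_strDist s t))
      ((summable_nat_add_iff N).mpr summable_geometric_two)
  have geom : ∑' k, (1 / 2 : ℝ) ^ (k + N) = 2 * (1 / 2 : ℝ) ^ N := by
    simp_rw [pow_add]
    rw [tsum_mul_right, tsum_geometric_two]
  rw [strDist, ← (summable_strDist s t).sum_add_tsum_nat_add N, head, zero_add]
  exact tail.trans geom.le

section shift

lemma shift_iterate_apply (s : ℕ → Fin 2) (n i : ℕ) : shift^[n] s i = s (n + i) := by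
  induction n generalizing s with
  | zero => simp
  | succ n ih => rw [Function.iterate_succ_apply, ih, shift, Nat.add_right_comm]

variable {s t : ℕ → Fin 2}

lemma liminf_strDist_shift_iterate_eq_zero
    (h : ∀ N, ∃ᶠ n in atTop, ∀ i < N, s (n + i) = t (n + i)) :
    liminf (fun n => strDist (shift^[n] s) (shift^[n] t)) atTop = 0 := by
  refine le_antisymm (le_of_forall_pos_le_add fun ε hε => ?_)
    (le_liminf_of_le (isBoundedUnder_of ⟨2, fun _ => strDist_le_two _ _⟩).isCoboundedUnder_ge
      (.of_forall fun _ => strDist_nonneg _ _))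
  obtain ⟨N, hN⟩ := exists_pow_lt_of_lt_one (half_pos hε) one_half_lt_one
  rw [zero_add]
  refine liminf_le_of_frequently_le ((h N).mono fun n hn => ?_)
    (isBoundedUnder_of ⟨0, fun _ => strDist_nonneg _ _⟩)
  calc strDist (shift^[n] s) (shift^[n] t) ≤ 2 * (1 / 2 : ℝ) ^ N :=
        strDist_le_of_forall_lt_eq N fun i hi => by simpa [shift_iterate_apply] using hn i hi
    _ ≤ ε := by linarith

lemma one_le_limsup_strDist_shift_iterate (h : ∃ᶠ n in atTop, s n ≠ t n) :
    1 ≤ limsup (fun n => strDist (shift^[n] s) (shift^[n] t)) atTop :=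
  le_limsup_of_frequently_le
    (h.mono fun n hn => one_le_strDist (by simpa only [shift_iterate_apply, add_zero] using hn))
    (isBoundedUnder_of ⟨2, fun _ => strDist_le_two _ _⟩)

end shift

/-- `n` lies in the dyadic block `k = Nat.log 2 (n + 1)`, at offset `n + 1 - 2 ^ k`. -/
def blockSeq (a : ℕ → Fin 2) (n : ℕ) : Fin 2 :=
  if Nat.log 2 (n + 1) % 2 = 1 then a (n + 1 - 2 ^ Nat.log 2 (n + 1)) else 0

lemma blockSeq_pow_sub_one_add (a : ℕ → Fin 2) {k j : ℕ} (hj : j < 2 ^ k) :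
    blockSeq a (2 ^ k - 1 + j) = if k % 2 = 1 then a j else 0 := by
  have hlog : Nat.log 2 (2 ^ k + j) = k :=
    Nat.log_eq_of_pow_le_of_lt_pow (Nat.le_add_right _ _) (by rw [pow_succ]; omega)
  rw [blockSeq, show 2 ^ k - 1 + j + 1 = 2 ^ k + j by have := k.one_le_two_pow; omega, hlog,
    Nat.add_sub_cancel_left]

lemma exists_mod_two_eq_lt_two_pow (r n : ℕ) : ∃ k, k % 2 = r % 2 ∧ n < 2 ^ k :=
  ⟨2 * n + r % 2, by omega, by have := (2 * n + r % 2).lt_two_pow_self; omega⟩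

lemma blockSeq_injective : Function.Injective blockSeq := by
  intro a b hab
  funext m
  obtain ⟨k, hk, hm⟩ := exists_mod_two_eq_lt_two_pow 1 m
  simpa [blockSeq_pow_sub_one_add, hm, hk] using congrFun hab (2 ^ k - 1 + m)

lemma frequently_blockSeq_eq (a b : ℕ → Fin 2) (N : ℕ) :
    ∃ᶠ n in atTop, ∀ i < N, blockSeq a (n + i) = blockSeq b (n + i) := by
  refine frequently_atTop.mpr fun n₀ => ?_
  obtain ⟨k, hk, hlt⟩ := exists_mod_two_eq_lt_two_pow 0 (n₀ + N)
  refine ⟨2 ^ k - 1, by omega, fun i hi => ?_⟩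
  rw [blockSeq_pow_sub_one_add a (by omega), blockSeq_pow_sub_one_add b (by omega)]
  simp [hk]

lemma frequently_blockSeq_ne {a b : ℕ → Fin 2} (hab : a ≠ b) :
    ∃ᶠ n in atTop, blockSeq a n ≠ blockSeq b n := by
  obtain ⟨m, hm⟩ := Function.ne_iff.mp hab
  refine frequently_atTop.mpr fun n₀ => ?_
  obtain ⟨k, hk, hlt⟩ := exists_mod_two_eq_lt_two_pow 1 (n₀ + m)
  refine ⟨2 ^ k - 1 + m, by omega, ?_⟩
  rw [blockSeq_pow_sub_one_add a (by omega), blockSeq_pow_sub_one_add b (by omega)]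
  simpa [hk] using hm

lemma uncountable_nat_to_fin_two : Uncountable (ℕ → Fin 2) := by
  rw [← Cardinal.aleph0_lt_mk_iff, ← Cardinal.power_def, Cardinal.mk_fin, Cardinal.mk_nat]
  exact_mod_cast Cardinal.cantor _

/-- The Bernoulli shift is Li–Yorke chaotic: there is an uncountable scrambled set. -/
theorem stmt19 :
    ∃ S : Set (ℕ → Fin 2), ¬ S.Countable ∧
      ∀ s ∈ S, ∀ t ∈ S, s ≠ t →
        liminf (fun n : ℕ => strDist (shift^[n] s) (shift^[n] t)) atTop = 0 ∧
        0 < limsup (fun n : ℕ => strDist (shift^[n] s) (shift^[n] t)) atTop := by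
  refine ⟨Set.range blockSeq, fun hS => ?_, ?_⟩
  · have := uncountable_nat_to_fin_two
    exact Set.not_countable_univ (by simpa using hS.preimage blockSeq_injective)
  · rintro _ ⟨a, rfl⟩ _ ⟨b, rfl⟩ hne
    have hab : a ≠ b := by rintro rfl; exact hne rfl
    exact ⟨liminf_strDist_shift_iterate_eq_zero (frequently_blockSeq_eq a b),
      one_pos.trans_le (one_le_limsup_strDist_shift_iterate (frequently_blockSeq_ne hab))⟩
end
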